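/- Let S be a transformation semigroup on a set Ω of size n containing a transitive permutation group G, and let f ∈ S have minimum rank r in S. Then the kernel partition of f is uniform (each part has size n/r) and the image of f is an r-clique in Gr(S). -/

import Mathlib

/-!
If `f` has minimum rank `r` in `S`, then no `h ∈ S` can identify two points of the image `I`
of `f`, since `h ∘ f` would have smaller rank; this is the clique statement. For every `g ∈ G`
the map `f ∘ g ∘ f` lies in `S`, so `f` is injective on `g I`: every translate `g I` meets each
kernel class `K` of `f` in exactly one point. Averaging `|g I ∩ K|` over the transitive group
`G` gives `r |K| / n`, hence `|K| = n / r`.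
-/

open Finset

variable {Ω : Type*} [Fintype Ω] [DecidableEq Ω]

/-- The graph associated to a set of transformations: `v ~ w` iff no `f ∈ S` collapses them. -/
def Gr (S : Set (Ω → Ω)) : SimpleGraph Ω where
  Adj v w := v ≠ w ∧ ∀ f ∈ S, f v ≠ f w
  symm := by constructor; rintro v w ⟨h1, h2⟩; exact ⟨h1.symm, fun f hf => (h2 f hf).symm⟩
  loopless := by constructor; rintro v ⟨h, _⟩; exact h rfl

/-- The rank of a transformation of a finite set: the size of its image. -/
def rank (f : Ω → Ω) : ℕ := (Finset.univ.image f).card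

/-- A permutation group is primitive if it is transitive and all blocks are trivial. -/
def IsPrimitive (G : Subgroup (Equiv.Perm Ω)) : Prop :=
  MulAction.IsPretransitive G Ω ∧
    ∀ B : Set Ω, MulAction.IsBlock G B → B.Subsingleton ∨ B = Set.univ

/-- The semigroup generated by a permutation group `G` and a transformation `f`. -/
def genSemigroup (G : Subgroup (Equiv.Perm Ω)) (f : Ω → Ω) : Subsemigroup (Function.End Ω) :=
  Subsemigroup.closure ((fun g : Equiv.Perm Ω => (g : Ω → Ω)) '' (G : Set (Equiv.Perm Ω)) ∪ {f})

/-- `G` synchronizes `f` if `⟨G, f⟩` contains a constant map. -/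
def Synchronizes (G : Subgroup (Equiv.Perm Ω)) (f : Ω → Ω) : Prop :=
  ∃ h ∈ genSemigroup G f, ∃ c : Ω, ∀ x : Ω, h x = c

/-- `f` has kernel type `(k,1,…,1)`: one kernel class of size `k`, all others singletons. -/
def KernelTypeK (f : Ω → Ω) (k : ℕ) : Prop :=
  ∃ A : Finset Ω, A.card = k ∧ (∀ x ∈ A, ∀ y ∈ A, f x = f y) ∧
    ∀ x y : Ω, f x = f y → x = y ∨ (x ∈ A ∧ y ∈ A)

/-- `f` has kernel type `(3,2,1,…,1)`. -/
def KernelType32 (f : Ω → Ω) : Prop :=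
  ∃ A B : Finset Ω, A.card = 3 ∧ B.card = 2 ∧
    (∀ x ∈ A, ∀ y ∈ A, f x = f y) ∧ (∀ x ∈ B, ∀ y ∈ B, f x = f y) ∧
    ∀ x y : Ω, f x = f y → x = y ∨ (x ∈ A ∧ y ∈ A) ∨ (x ∈ B ∧ y ∈ B)

open MulAction

section TransitiveCounting

variable {G α : Type*} [Group G] [MulAction G α] [Fintype G] [DecidableEq α]
  [IsPretransitive G α]

theorem card_filter_smul_eq_eq (a b c : α) :
    #{g : G | g • a = b} = #{g : G | g • a = c} := by
  obtain ⟨k, rfl⟩ := exists_smul_eq G b c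
  refine card_nbij' (k * ·) (k⁻¹ * ·) ?_ ?_ ?_ ?_ <;> intro g hg <;>
    simp_all [mul_smul]

variable [Fintype α]

theorem card_mul_card_filter_smul_eq (a b : α) :
    Fintype.card α * #{g : G | g • a = b} = Fintype.card G := by
  calc Fintype.card α * #{g : G | g • a = b} = ∑ c : α, #{g : G | g • a = c} := by
        simp [card_filter_smul_eq_eq a _ b]
    _ = Fintype.card G := (card_eq_sum_card_fiberwise fun g _ => mem_univ (g • a)).symm

theorem card_mul_sum_card_filter_smul_mem (A B : Finset α) :
    Fintype.card α * ∑ g : G, #{a ∈ A | g • a ∈ B} = Fintype.card G * #A * #B := by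
  have hswap : ∑ g : G, #{a ∈ A | g • a ∈ B} = ∑ a ∈ A, ∑ b ∈ B, #{g : G | g • a = b} := by
    simp only [card_filter]
    rw [sum_comm]
    refine sum_congr rfl fun a _ => ?_
    rw [sum_comm]
    simp [sum_ite_eq]
  simp only [hswap, mul_sum, card_mul_card_filter_smul_eq, sum_const, smul_eq_mul]
  ring

end TransitiveCounting

theorem rank_comp_eq_iff {f h : Ω → Ω} :
    rank (h ∘ f) = rank f ↔ Set.InjOn h (univ.image f : Set Ω) := by
  rw [rank, rank, ← image_image, card_image_iff]

theorem rank_comp_le (f h : Ω → Ω) : rank (h ∘ f) ≤ rank f := by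
  rw [rank, rank, ← image_image]
  exact card_image_le

theorem injOn_image_of_rank_le {f h : Ω → Ω} (hr : rank f ≤ rank (h ∘ f)) :
    Set.InjOn h (univ.image f : Set Ω) :=
  rank_comp_eq_iff.mp ((rank_comp_le f h).antisymm hr)

/-- If `f ∘ h ∘ f` has the rank of `f`, then `h (image f)` is a transversal of the kernel of `f`. -/
theorem card_filter_image_comp_eq_one {f h : Ω → Ω} (hr : rank f ≤ rank (f ∘ h ∘ f)) (x : Ω) :
    #{i ∈ univ.image f | f (h i) = f x} = 1 := by
  set I := univ.image f
  have hinj : Set.InjOn (f ∘ h) I := injOn_image_of_rank_le hr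
  have hsurj : I.image (f ∘ h) = I :=
    eq_of_subset_of_card_le (fun y hy => by obtain ⟨i, -, rfl⟩ := mem_image.mp hy; simp [I])
      (card_image_of_injOn hinj).ge
  have hx : f x ∈ I.image (f ∘ h) := by rw [hsurj]; exact mem_image_of_mem f (mem_univ x)
  obtain ⟨i, hi, hix⟩ := mem_image.mp hx
  rw [card_eq_one]
  refine ⟨i, eq_singleton_iff_unique_mem.mpr ⟨mem_filter.mpr ⟨hi, hix⟩, fun j hj => ?_⟩⟩
  obtain ⟨hj, hjx⟩ := mem_filter.mp hj
  exact hinj hj hi (hjx.trans hix.symm)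

theorem isNClique_image_of_rank_le {S : Set (Ω → Ω)} {f : Ω → Ω} (hS : ∀ h ∈ S, h ∘ f ∈ S)
    (hmin : ∀ h ∈ S, rank f ≤ rank h) : (Gr S).IsNClique (rank f) (univ.image f) :=
  ⟨fun _ hu _ hv huv => ⟨huv, fun h hh => (injOn_image_of_rank_le (hmin _ (hS h hh))).ne hu hv huv⟩,
    rfl⟩

theorem card_fiber_eq_card_div_rank {G : Type*} [Group G] [MulAction G Ω] [Finite G]
    [IsPretransitive G Ω] {f : Ω → Ω} (hrank : ∀ g : G, rank f ≤ rank (f ∘ (g • ·) ∘ f))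
    (x : Ω) : #{y | f y = f x} = Fintype.card Ω / rank f := by
  have : Fintype G := Fintype.ofFinite G
  set K : Finset Ω := {y | f y = f x}
  have hcount := card_mul_sum_card_filter_smul_mem (G := G) (univ.image f) K
  simp only [K, mem_filter, mem_univ, true_and, card_filter_image_comp_eq_one (hrank _),
    sum_const, card_univ, smul_eq_mul, mul_one] at hcount
  have hr : 0 < rank f := card_pos.mpr ⟨f x, mem_image_of_mem f (mem_univ x)⟩
  refine (Nat.div_eq_of_eq_mul_right hr
    (Nat.eq_of_mul_eq_mul_right (Fintype.card_pos (α := G)) ?_)).symm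
  rw [hcount, rank]
  ring

theorem stmt19 (S : Set (Ω → Ω)) (hS : ∀ f ∈ S, ∀ g ∈ S, (g ∘ f) ∈ S)
    (G : Subgroup (Equiv.Perm Ω)) (hGS : ∀ g : Equiv.Perm Ω, g ∈ G → ⇑g ∈ S)
    (hGtrans : MulAction.IsPretransitive G Ω) (f : Ω → Ω) (hf : f ∈ S)
    (hmin : ∀ h ∈ S, rank f ≤ rank h) :
    (∀ x : Ω, (Finset.univ.filter (fun y => f y = f x)).card = Fintype.card Ω / rank f) ∧
      (Gr S).IsNClique (rank f) (Finset.univ.image f) :=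
  ⟨card_fiber_eq_card_div_rank fun g : G => hmin _ (hS _ (hS _ hf _ (hGS g g.2)) _ hf),
    isNClique_image_of_rank_le (hS f hf) hmin⟩
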